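/- An element b of B(l) satisfies ε₀(b) + 2ε₁(b) + 3ε₂(b) = l if and only if b = (α, β, β, β, β, α) for some nonnegative integers α, β with 2α + 3β ≤ l. That is, the minimal elements of B(l) are exactly {(α, β, β, β, β, α) : α, β ≥ 0, 2α + 3β ≤ l}. -/

import Mathlib

structure V where
  x1 : ℤ
  x2 : ℤ
  x3 : ℤ
  xb3 : ℤ
  xb2 : ℤ
  xb1 : ℤ
deriving DecidableEq

/-- Membership in the perfect crystal `B(l)`: all entries nonnegative,
`x₃ ≡ x̄₃ (mod 2)` and `s(b) ≤ l`. -/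
def inB (l : ℤ) (b : V) : Prop :=
  0 ≤ b.x1 ∧ 0 ≤ b.x2 ∧ 0 ≤ b.x3 ∧ 0 ≤ b.xb3 ∧ 0 ≤ b.xb2 ∧ 0 ≤ b.xb1 ∧
  b.x3 % 2 = b.xb3 % 2 ∧
  b.x1 + b.x2 + (b.x3 + b.xb3) / 2 + b.xb2 + b.xb1 ≤ l

def sB (b : V) : ℤ := b.x1 + b.x2 + (b.x3 + b.xb3) / 2 + b.xb2 + b.xb1
def tB (b : V) : ℤ := b.x2 + (b.x3 + b.xb3) / 2
def z1 (b : V) : ℤ := b.xb1 - b.x1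
def z2 (b : V) : ℤ := b.xb2 - b.xb3
def z3 (b : V) : ℤ := b.x3 - b.x2
def z4 (b : V) : ℤ := (b.xb3 - b.x3) / 2
def maxA (b : V) : ℤ :=
  max 0 (max (z1 b) (max (z1 b + z2 b) (max (z1 b + z2 b + 3 * z4 b)
    (max (z1 b + z2 b + z3 b + 3 * z4 b) (2 * z1 b + z2 b + z3 b + 3 * z4 b)))))
def eps1 (b : V) : ℤ := b.xb1 + max (b.xb3 - b.xb2 + max (b.x2 - b.x3) 0) 0
def phi1 (b : V) : ℤ := b.x1 + max (b.x3 - b.x2 + max (b.xb2 - b.xb3) 0) 0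
def eps2 (b : V) : ℤ := b.xb2 + max (b.x3 - b.xb3) 0 / 2
def phi2 (b : V) : ℤ := b.x2 + max (b.xb3 - b.x3) 0 / 2
def eps0 (l : ℤ) (b : V) : ℤ :=
  l - sB b + maxA b - (2 * z1 b + z2 b + z3 b + 3 * z4 b)
def phi0 (l : ℤ) (b : V) : ℤ := l - sB b + maxA b
def f2 (b : V) : V :=
  if z4 b ≤ 0 then ⟨b.x1, b.x2 - 1, b.x3 + 2, b.xb3, b.xb2, b.xb1⟩
  else ⟨b.x1, b.x2, b.x3, b.xb3 - 2, b.xb2 + 1, b.xb1⟩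
def e2 (b : V) : V :=
  if 0 ≤ z4 b then ⟨b.x1, b.x2, b.x3, b.xb3 + 2, b.xb2 - 1, b.xb1⟩
  else ⟨b.x1, b.x2 + 1, b.x3 - 2, b.xb3, b.xb2, b.xb1⟩
def f1 (b : V) : V :=
  if max (z2 b) 0 ≤ -z3 b then ⟨b.x1 - 1, b.x2 + 1, b.x3, b.xb3, b.xb2, b.xb1⟩
  else if z2 b ≤ 0 ∧ 0 < z3 b then ⟨b.x1, b.x2, b.x3 - 1, b.xb3 + 1, b.xb2, b.xb1⟩
  else ⟨b.x1, b.x2, b.x3, b.xb3, b.xb2 - 1, b.xb1 + 1⟩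
def e1 (b : V) : V :=
  if max (-z3 b) 0 ≤ z2 b then ⟨b.x1, b.x2, b.x3, b.xb3, b.xb2 + 1, b.xb1 - 1⟩
  else if z2 b < 0 ∧ 0 ≤ z3 b then ⟨b.x1, b.x2, b.x3 + 1, b.xb3 - 1, b.xb2, b.xb1⟩
  else ⟨b.x1 + 1, b.x2 - 1, b.x3, b.xb3, b.xb2, b.xb1⟩

/-!
Expanding the definitions, the level `ε₀ + 2ε₁ + 3ε₂` of `b` equals `l` plus
`(max A - z₁) + |x̄₃ - x̄₂ + (x₂ - x₃)₊| + (x₂ - x₃)₊ + (3/2)(x₃ - x̄₃)₊`, a sum of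
nonnegative terms. It therefore equals `l` exactly when `max A = z₁`, `x̄₃ = x̄₂` and
`x₂ ≤ x₃ ≤ x̄₃`; the conditions `z₄ ≤ 0` and `2z₁ + z₂ + z₃ + 3z₄ ≤ z₁` hidden in
`max A = z₁` then force `x₃ = x̄₃`, `x₂ = x₃` and `x₁ = x̄₁`.
-/

def level (l : ℤ) (b : V) : ℤ := eps0 l b + 2 * eps1 b + 3 * eps2 b

theorem z1_le_maxA (b : V) : z1 b ≤ maxA b :=
  le_max_of_le_right (le_max_left _ _)

theorem level_eq {b : V} (l : ℤ) (hpar : b.x3 % 2 = b.xb3 % 2) :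
    level l b = l + (maxA b - z1 b) + |b.xb3 - b.xb2 + max (b.x2 - b.x3) 0|
      + max (b.x2 - b.x3) 0 + 3 * (max (b.x3 - b.xb3) 0 / 2) := by
  rw [abs_eq_max_neg]
  simp only [level, eps0, eps1, eps2, sB, z1, z2, z3, z4]
  omega

theorem level_eq_self_iff {b : V} (l : ℤ) (hpar : b.x3 % 2 = b.xb3 % 2) :
    level l b = l ↔
      maxA b = z1 b ∧ b.xb3 = b.xb2 ∧ b.x2 ≤ b.x3 ∧ b.x3 ≤ b.xb3 := by
  rw [level_eq l hpar]
  have hA := z1_le_maxA b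
  have habs := abs_nonneg (b.xb3 - b.xb2 + max (b.x2 - b.x3) 0)
  constructor
  · intro h
    have hzero : |b.xb3 - b.xb2 + max (b.x2 - b.x3) 0| = 0 := by omega
    rw [abs_eq_zero] at hzero
    omega
  · rintro ⟨hA, hde, hbc, hcd⟩
    rw [hA, abs_eq_zero.mpr (by omega)]
    omega

theorem coords_eq_of_maxA_eq_z1 {b : V} (hpar : b.x3 % 2 = b.xb3 % 2)
    (hA : maxA b = z1 b) (hde : b.xb3 = b.xb2) (hbc : b.x2 ≤ b.x3) (hcd : b.x3 ≤ b.xb3) :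
    b.x3 = b.x2 ∧ b.xb3 = b.x2 ∧ b.xb2 = b.x2 ∧ b.xb1 = b.x1 := by
  have h0 : 0 ≤ maxA b := le_max_left _ _
  have hz4 : z1 b + z2 b + 3 * z4 b ≤ maxA b := by simp [maxA]
  have htop : 2 * z1 b + z2 b + z3 b + 3 * z4 b ≤ maxA b := by simp [maxA]
  simp only [z1, z2, z3, z4] at hA hz4 htop
  omega

theorem stmt5_general (l : ℤ) (b : V) (hb : inB l b) :
    eps0 l b + 2 * eps1 b + 3 * eps2 b = l ↔
      ∃ α β : ℤ, 0 ≤ α ∧ 0 ≤ β ∧ 2 * α + 3 * β ≤ l ∧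
        b = ⟨α, β, β, β, β, α⟩ := by
  obtain ⟨hx1, hx2, -, -, -, -, hpar, hs⟩ := hb
  change level l b = l ↔ _
  rw [level_eq_self_iff l hpar]
  constructor
  · rintro ⟨hA, hde, hbc, hcd⟩
    obtain ⟨h3, hb3, hb2, hb1⟩ := coords_eq_of_maxA_eq_z1 hpar hA hde hbc hcd
    refine ⟨b.x1, b.x2, hx1, hx2, by omega, ?_⟩
    obtain ⟨x1, x2, x3, xb3, xb2, xb1⟩ := b
    dsimp only at h3 hb3 hb2 hb1
    subst h3 hb3 hb2 hb1
    rfl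
  · rintro ⟨α, β, -, -, -, rfl⟩
    simp [maxA, z1, z2, z3, z4]

theorem stmt5 (l : ℤ) (hl : 0 < l) (b : V) (hb : inB l b) :
    eps0 l b + 2 * eps1 b + 3 * eps2 b = l ↔
      ∃ α β : ℤ, 0 ≤ α ∧ 0 ≤ β ∧ 2 * α + 3 * β ≤ l ∧
        b = ⟨α, β, β, β, β, α⟩ :=
  stmt5_general l b hb
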